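/- Let Λ_TT and Γ_UU be continuous (T,T)-controlled and (U,U)-controlled g-fusion Bessel families for H with bounds B and D respectively, let m ∈ L^∞(X, μ), and let M_{m,ΛT,ΓU} be the bounded multiplier operator determined by ⟨M_{m,ΛT,ΓU} f, g⟩ = ∫_X m(x) v(x) w(x) ⟨T P_{F(x)} Λ_x* Γ_x P_{G(x)} U f, g⟩ dμ(x). Suppose there exists λ ∈ (0,1) such that ‖f − M_{m,ΛT,ΓU} f‖ ≤ λ‖f‖ for all f ∈ H. Then Γ_UU is a continuous (U,U)-controlled g-fusion frame for H with lower bound (1−λ)²/(B‖m‖_∞²) and upper bound D, and Λ_TT is a continuous (T,T)-controlled g-fusion frame for H with lower bound (1−λ)²/(D‖m‖_∞²) and upper bound B. -/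

import Mathlib

open MeasureTheory ContinuousLinearMap
open scoped ComplexOrder

/-- The orthogonal projection onto a closed subspace, as an operator `H →L[ℂ] H`. -/
noncomputable def ctrlProj {H : Type*} [NormedAddCommGroup H] [InnerProductSpace ℂ H]
    (F : Submodule ℂ H) [Submodule.HasOrthogonalProjection F] : H →L[ℂ] H :=
  F.subtypeL.comp (Submodule.orthogonalProjection F)

/-- Auxiliary arithmetic lemma extracting the frame lower bound from the
quadratic estimate on the norm of the (adjoint of the) multiplier. -/
lemma stmt17_aux (lam Cm C I nf nM : ℝ) (hlam : lam < 1) (hC : 0 < C) (hCm : 0 ≤ Cm)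
    (hI : 0 ≤ I) (hnf : 0 ≤ nf) (hnM : 0 ≤ nM)
    (hsq : nM ^ 2 ≤ Cm * I ^ ((1 : ℝ)/2) * (C ^ ((1 : ℝ)/2) * nM))
    (hlow : (1 - lam) * nf ≤ nM) :
    (1 - lam) ^ 2 / (C * Cm ^ 2) * nf ^ 2 ≤ I := by
  have hrpI : (I ^ ((1 : ℝ)/2)) ^ 2 = I := by
    rw [← Real.rpow_natCast (I ^ ((1:ℝ)/2)) 2, ← Real.rpow_mul hI]
    norm_num
  have hrpC : (C ^ ((1 : ℝ)/2)) ^ 2 = C := by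
    rw [← Real.rpow_natCast (C ^ ((1:ℝ)/2)) 2, ← Real.rpow_mul hC.le]
    norm_num
  have hM1 : nM ≤ Cm * I ^ ((1 : ℝ)/2) * C ^ ((1 : ℝ)/2) := by
    rcases eq_or_lt_of_le hnM with h0 | h0
    · rw [← h0]; positivity
    · have := hsq
      rw [pow_two] at this
      have h2 : nM * nM ≤ (Cm * I ^ ((1:ℝ)/2) * C ^ ((1:ℝ)/2)) * nM := by
        calc nM * nM ≤ Cm * I ^ ((1:ℝ)/2) * (C ^ ((1:ℝ)/2) * nM) := this
          _ = (Cm * I ^ ((1:ℝ)/2) * C ^ ((1:ℝ)/2)) * nM := by ring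
      exact le_of_mul_le_mul_right h2 h0
  have hlow2 : (1 - lam) * nf ≤ Cm * I ^ ((1 : ℝ)/2) * C ^ ((1 : ℝ)/2) := hlow.trans hM1
  have hsq2 : ((1 - lam) * nf) ^ 2 ≤ Cm ^ 2 * I * C := by
    calc ((1 - lam) * nf) ^ 2 ≤ (Cm * I ^ ((1:ℝ)/2) * C ^ ((1:ℝ)/2)) ^ 2 := by
          apply pow_le_pow_left₀ (mul_nonneg (by linarith) hnf) hlow2
      _ = Cm ^ 2 * ((I ^ ((1:ℝ)/2)) ^ 2) * ((C ^ ((1:ℝ)/2)) ^ 2) := by ring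
      _ = Cm ^ 2 * I * C := by rw [hrpI, hrpC]
  rcases eq_or_ne Cm 0 with h0 | h0
  · rw [h0]
    simp only [ne_eq, OfNat.ofNat_ne_zero, not_false_eq_true, zero_pow, mul_zero, div_zero,
      zero_mul]
    exact hI
  · have hpos : 0 < C * Cm ^ 2 := by
      have : 0 < Cm := lt_of_le_of_ne hCm (Ne.symm h0)
      positivity
    rw [div_mul_eq_mul_div, div_le_iff₀ hpos]
    calc (1 - lam) ^ 2 * nf ^ 2 = ((1 - lam) * nf) ^ 2 := by ring
      _ ≤ Cm ^ 2 * I * C := hsq2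
      _ = I * (C * Cm ^ 2) := by ring


set_option maxHeartbeats 1000000 in
/-- If the multiplier `M_{m,ΛT,ΓU}` of continuous `(T,T)`- and
`(U,U)`-controlled `g`-fusion Bessel families `Λ_TT`, `Γ_UU` (bounds `B`, `D`) satisfies
`‖f − M f‖ ≤ λ‖f‖` for some `λ ∈ (0,1)`, then `Γ_UU` is a continuous `(U,U)`-controlled
`g`-fusion frame with bounds `(1−λ)²/(B‖m‖_∞²)`, `D`, and `Λ_TT` is a continuous
`(T,T)`-controlled `g`-fusion frame with bounds `(1−λ)²/(D‖m‖_∞²)`, `B`. -/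
theorem stmt17
    {H : Type*} [NormedAddCommGroup H] [InnerProductSpace ℂ H] [CompleteSpace H]
    {X : Type*} [MeasurableSpace X] (μ : Measure X)
    {K : X → Type*} [∀ x, NormedAddCommGroup (K x)] [∀ x, InnerProductSpace ℂ (K x)]
    [∀ x, CompleteSpace (K x)]
    (F G : X → Submodule ℂ H) [∀ x, Submodule.HasOrthogonalProjection (F x)]
    [∀ x, Submodule.HasOrthogonalProjection (G x)]
    (Λ Γ : ∀ x, H →L[ℂ] K x) (v w : X → ℝ) (T U : H →L[ℂ] H)
    (hv : Measurable v) (hvpos : ∀ x, 0 < v x)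
    (hw : Measurable w) (hwpos : ∀ x, 0 < w x)
    (hT : T.IsPositive) (hU : U.IsPositive) (hTinv : IsUnit T) (hUinv : IsUnit U)
    (hFmeas : ∀ f g : H, Measurable fun x => (inner ℂ ((ctrlProj (F x)) f) g : ℂ))
    (hGmeas : ∀ f g : H, Measurable fun x => (inner ℂ ((ctrlProj (G x)) f) g : ℂ))
    (B D : ℝ) (hB : 0 < B) (hD : 0 < D)
    -- Λ_TT is a continuous (T,T)-controlled g-fusion Bessel family with bound B
    (hΛint : ∀ f : H,
      Integrable (fun x => (v x)^2 * ‖Λ x ((ctrlProj (F x)) (T f))‖^2) μ)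
    (hΛBessel : ∀ f : H,
      (∫ x, (v x)^2 * ‖Λ x ((ctrlProj (F x)) (T f))‖^2 ∂μ) ≤ B * ‖f‖^2)
    -- Γ_UU is a continuous (U,U)-controlled g-fusion Bessel family with bound D
    (hΓint : ∀ f : H,
      Integrable (fun x => (w x)^2 * ‖Γ x ((ctrlProj (G x)) (U f))‖^2) μ)
    (hΓBessel : ∀ f : H,
      (∫ x, (w x)^2 * ‖Γ x ((ctrlProj (G x)) (U f))‖^2 ∂μ) ≤ D * ‖f‖^2)
    -- m ∈ L^∞(X, μ) and the multiplier M = M_{m,ΛT,ΓU}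
    (m : X → ℂ) (hm : MemLp m ⊤ μ)
    (M : H →L[ℂ] H)
    (hMint : ∀ f g : H, Integrable (fun x => m x * ((v x : ℂ)) * ((w x : ℂ)) *
      (inner ℂ (T ((ctrlProj (F x)) ((adjoint (Λ x))
        (Γ x ((ctrlProj (G x)) (U f)))))) g : ℂ)) μ)
    (hM : ∀ f g : H, (inner ℂ (M f) g : ℂ) = ∫ x, m x * ((v x : ℂ)) * ((w x : ℂ)) *
      (inner ℂ (T ((ctrlProj (F x)) ((adjoint (Λ x))
        (Γ x ((ctrlProj (G x)) (U f)))))) g : ℂ) ∂μ)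
    (lam : ℝ) (hlam₀ : 0 < lam) (hlam₁ : lam < 1)
    (hpert : ∀ f : H, ‖f - M f‖ ≤ lam * ‖f‖) :
    (∀ f : H,
      (1 - lam)^2 / (B * ((eLpNorm m ⊤ μ).toReal)^2) * ‖f‖^2 ≤
        (∫ x, (w x)^2 * ‖Γ x ((ctrlProj (G x)) (U f))‖^2 ∂μ) ∧
      (∫ x, (w x)^2 * ‖Γ x ((ctrlProj (G x)) (U f))‖^2 ∂μ) ≤ D * ‖f‖^2) ∧
    (∀ f : H,
      (1 - lam)^2 / (D * ((eLpNorm m ⊤ μ).toReal)^2) * ‖f‖^2 ≤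
        (∫ x, (v x)^2 * ‖Λ x ((ctrlProj (F x)) (T f))‖^2 ∂μ) ∧
      (∫ x, (v x)^2 * ‖Λ x ((ctrlProj (F x)) (T f))‖^2 ∂μ) ≤ B * ‖f‖^2) := by
  classical
  set Cm : ℝ := (eLpNorm m ⊤ μ).toReal with hCmdef
  have hCm0 : 0 ≤ Cm := ENNReal.toReal_nonneg
  set IΓ : H → ℝ := fun f => ∫ x, (w x)^2 * ‖Γ x ((ctrlProj (G x)) (U f))‖^2 ∂μ with hIΓdef
  set IΛ : H → ℝ := fun f => ∫ x, (v x)^2 * ‖Λ x ((ctrlProj (F x)) (T f))‖^2 ∂μ with hIΛdef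
  have hIΓ0 : ∀ f, 0 ≤ IΓ f := fun f => integral_nonneg fun x => by positivity
  have hIΛ0 : ∀ f, 0 ≤ IΛ f := fun f => integral_nonneg fun x => by positivity
  -- a.e. bound on m
  have hmle : ∀ᵐ x ∂μ, ‖m x‖ ≤ Cm := by
    have h := ae_le_eLpNormEssSup (f := m) (μ := μ)
    have hne : eLpNormEssSup m μ ≠ ⊤ := by
      rw [← eLpNorm_exponent_top]; exact hm.2.ne
    filter_upwards [h] with x hx
    calc ‖m x‖ = ((‖m x‖₊ : ENNReal)).toReal := by simp
      _ ≤ Cm := by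
          rw [hCmdef, eLpNorm_exponent_top]
          exact ENNReal.toReal_mono hne hx
  -- measurability and L² membership
  have hΓm : ∀ f : H,
      AEStronglyMeasurable (fun x => w x * ‖Γ x ((ctrlProj (G x)) (U f))‖) μ := by
    intro f
    have h1 := (hΓint f).aestronglyMeasurable
    have h2 : AEStronglyMeasurable
        (fun x => Real.sqrt ((w x)^2 * ‖Γ x ((ctrlProj (G x)) (U f))‖^2)) μ :=
      Real.continuous_sqrt.comp_aestronglyMeasurable h1
    refine h2.congr (Filter.Eventually.of_forall fun x => ?_)
    dsimp only
    rw [← mul_pow, Real.sqrt_sq (mul_nonneg (hwpos x).le (norm_nonneg _))]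
  have hΛm : ∀ f : H,
      AEStronglyMeasurable (fun x => v x * ‖Λ x ((ctrlProj (F x)) (T f))‖) μ := by
    intro f
    have h1 := (hΛint f).aestronglyMeasurable
    have h2 : AEStronglyMeasurable
        (fun x => Real.sqrt ((v x)^2 * ‖Λ x ((ctrlProj (F x)) (T f))‖^2)) μ :=
      Real.continuous_sqrt.comp_aestronglyMeasurable h1
    refine h2.congr (Filter.Eventually.of_forall fun x => ?_)
    dsimp only
    rw [← mul_pow, Real.sqrt_sq (mul_nonneg (hvpos x).le (norm_nonneg _))]
  have hΓL2 : ∀ f : H, MemLp (fun x => w x * ‖Γ x ((ctrlProj (G x)) (U f))‖) 2 μ := by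
    intro f
    rw [memLp_two_iff_integrable_sq (hΓm f)]
    refine (hΓint f).congr (Filter.Eventually.of_forall fun x => ?_)
    dsimp only
    rw [mul_pow]
  have hΛL2 : ∀ f : H, MemLp (fun x => v x * ‖Λ x ((ctrlProj (F x)) (T f))‖) 2 μ := by
    intro f
    rw [memLp_two_iff_integrable_sq (hΛm f)]
    refine (hΛint f).congr (Filter.Eventually.of_forall fun x => ?_)
    dsimp only
    rw [mul_pow]
  -- rewriting the inner product in the multiplier
  have hsaT : ∀ (a g : H), (inner ℂ (T a) g : ℂ) = inner ℂ a (T g) := by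
    intro a g
    conv_lhs => rw [← hT.isSelfAdjoint.adjoint_eq]
    exact adjoint_inner_left T g a
  have hsaP : ∀ (x : X) (a g : H),
      (inner ℂ ((ctrlProj (F x)) a) g : ℂ) = inner ℂ a ((ctrlProj (F x)) g) :=
    fun x a g => Submodule.inner_starProjection_left_eq_right (F x) a g
  have hinner : ∀ (x : X) (f g : H),
      (inner ℂ (T ((ctrlProj (F x)) ((adjoint (Λ x))
          (Γ x ((ctrlProj (G x)) (U f)))))) g : ℂ)
        = inner ℂ (Γ x ((ctrlProj (G x)) (U f))) (Λ x ((ctrlProj (F x)) (T g))) := by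
    intro x f g
    rw [hsaT, hsaP x, adjoint_inner_left]
  -- the key estimate
  have hkey : ∀ f g : H,
      ‖(inner ℂ (M f) g : ℂ)‖ ≤ Cm * (IΓ f) ^ ((1:ℝ)/2) * (IΛ g) ^ ((1:ℝ)/2) := by
    intro f g
    rw [hM f g]
    have hint1 := (hMint f g).norm
    have hint2 : Integrable (fun x =>
        (w x * ‖Γ x ((ctrlProj (G x)) (U f))‖) * (v x * ‖Λ x ((ctrlProj (F x)) (T g))‖)) μ := by
      have h := (hΛL2 g).smul (φ := fun x => w x * ‖Γ x ((ctrlProj (G x)) (U f))‖)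
        (hΓL2 f) (p := 2) (q := 2) (r := 1)
      exact memLp_one_iff_integrable.mp h
    have hint3 : Integrable (fun x =>
        Cm * ((w x * ‖Γ x ((ctrlProj (G x)) (U f))‖) *
          (v x * ‖Λ x ((ctrlProj (F x)) (T g))‖))) μ := hint2.const_mul Cm
    have hpt : ∀ᵐ x ∂μ, ‖m x * ((v x : ℂ)) * ((w x : ℂ)) *
        (inner ℂ (T ((ctrlProj (F x)) ((adjoint (Λ x))
          (Γ x ((ctrlProj (G x)) (U f)))))) g : ℂ)‖ ≤
        Cm * ((w x * ‖Γ x ((ctrlProj (G x)) (U f))‖) *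
          (v x * ‖Λ x ((ctrlProj (F x)) (T g))‖)) := by
      filter_upwards [hmle] with x hx
      rw [hinner x f g]
      have hcs : ‖(inner ℂ (Γ x ((ctrlProj (G x)) (U f)))
          (Λ x ((ctrlProj (F x)) (T g))) : ℂ)‖ ≤
          ‖Γ x ((ctrlProj (G x)) (U f))‖ * ‖Λ x ((ctrlProj (F x)) (T g))‖ :=
        norm_inner_le_norm _ _
      have hvx := (hvpos x).le
      have hwx := (hwpos x).le
      calc ‖m x * ((v x : ℂ)) * ((w x : ℂ)) * (inner ℂ (Γ x ((ctrlProj (G x)) (U f)))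
            (Λ x ((ctrlProj (F x)) (T g))) : ℂ)‖
          = ‖m x‖ * v x * w x * ‖(inner ℂ (Γ x ((ctrlProj (G x)) (U f)))
            (Λ x ((ctrlProj (F x)) (T g))) : ℂ)‖ := by
            rw [norm_mul, norm_mul, norm_mul, Complex.norm_real, Complex.norm_real,
              Real.norm_of_nonneg hvx, Real.norm_of_nonneg hwx]
        _ ≤ Cm * v x * w x * (‖Γ x ((ctrlProj (G x)) (U f))‖ *
            ‖Λ x ((ctrlProj (F x)) (T g))‖) := by
            apply mul_le_mul _ hcs (norm_nonneg _) (by positivity)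
            apply mul_le_mul_of_nonneg_right (mul_le_mul_of_nonneg_right hx hvx) hwx
        _ = Cm * ((w x * ‖Γ x ((ctrlProj (G x)) (U f))‖) *
            (v x * ‖Λ x ((ctrlProj (F x)) (T g))‖)) := by ring
    have hhold : (∫ x, (w x * ‖Γ x ((ctrlProj (G x)) (U f))‖) *
          (v x * ‖Λ x ((ctrlProj (F x)) (T g))‖) ∂μ) ≤
        (IΓ f) ^ ((1:ℝ)/2) * (IΛ g) ^ ((1:ℝ)/2) := by
      have h2 : ENNReal.ofReal (2:ℝ) = 2 := by norm_num
      have hhh := integral_mul_le_Lp_mul_Lq_of_nonneg (μ := μ)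
        (Real.holderConjugate_iff.mpr ⟨one_lt_two, by norm_num⟩)
        (f := fun x => w x * ‖Γ x ((ctrlProj (G x)) (U f))‖)
        (g := fun x => v x * ‖Λ x ((ctrlProj (F x)) (T g))‖)
        (Filter.Eventually.of_forall fun x => mul_nonneg (hwpos x).le (norm_nonneg _))
        (Filter.Eventually.of_forall fun x => mul_nonneg (hvpos x).le (norm_nonneg _))
        (h2 ▸ hΓL2 f) (h2 ▸ hΛL2 g)
      have e1 : (∫ x, (w x * ‖Γ x ((ctrlProj (G x)) (U f))‖) ^ (2:ℝ) ∂μ) = IΓ f := by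
        refine integral_congr_ae (Filter.Eventually.of_forall fun x => ?_)
        dsimp only
        rw [show (2:ℝ) = ((2:ℕ):ℝ) by norm_num, Real.rpow_natCast, mul_pow]
      have e2 : (∫ x, (v x * ‖Λ x ((ctrlProj (F x)) (T g))‖) ^ (2:ℝ) ∂μ) = IΛ g := by
        refine integral_congr_ae (Filter.Eventually.of_forall fun x => ?_)
        dsimp only
        rw [show (2:ℝ) = ((2:ℕ):ℝ) by norm_num, Real.rpow_natCast, mul_pow]
      beta_reduce at hhh
      rw [e1, e2] at hhh
      exact hhh
    calc ‖∫ x, m x * ((v x : ℂ)) * ((w x : ℂ)) *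
          (inner ℂ (T ((ctrlProj (F x)) ((adjoint (Λ x))
            (Γ x ((ctrlProj (G x)) (U f)))))) g : ℂ) ∂μ‖
        ≤ ∫ x, ‖m x * ((v x : ℂ)) * ((w x : ℂ)) *
          (inner ℂ (T ((ctrlProj (F x)) ((adjoint (Λ x))
            (Γ x ((ctrlProj (G x)) (U f)))))) g : ℂ)‖ ∂μ := norm_integral_le_integral_norm _
      _ ≤ ∫ x, Cm * ((w x * ‖Γ x ((ctrlProj (G x)) (U f))‖) *
            (v x * ‖Λ x ((ctrlProj (F x)) (T g))‖)) ∂μ :=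
          integral_mono_ae hint1 hint3 hpt
      _ = Cm * ∫ x, (w x * ‖Γ x ((ctrlProj (G x)) (U f))‖) *
            (v x * ‖Λ x ((ctrlProj (F x)) (T g))‖) ∂μ := integral_const_mul Cm _
      _ ≤ Cm * ((IΓ f) ^ ((1:ℝ)/2) * (IΛ g) ^ ((1:ℝ)/2)) :=
          mul_le_mul_of_nonneg_left hhold hCm0
      _ = Cm * (IΓ f) ^ ((1:ℝ)/2) * (IΛ g) ^ ((1:ℝ)/2) := by ring
  -- bounds on the halves coming from the Bessel conditions
  have hBesselΛrt : ∀ g : H, (IΛ g) ^ ((1:ℝ)/2) ≤ B ^ ((1:ℝ)/2) * ‖g‖ := by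
    intro g
    calc (IΛ g) ^ ((1:ℝ)/2) ≤ (B * ‖g‖^2) ^ ((1:ℝ)/2) :=
        Real.rpow_le_rpow (hIΛ0 g) (hΛBessel g) (by norm_num)
      _ = B ^ ((1:ℝ)/2) * ‖g‖ := by
          rw [Real.mul_rpow hB.le (by positivity), ← Real.rpow_natCast ‖g‖ 2,
            ← Real.rpow_mul (norm_nonneg g)]
          norm_num
  have hBesselΓrt : ∀ f : H, (IΓ f) ^ ((1:ℝ)/2) ≤ D ^ ((1:ℝ)/2) * ‖f‖ := by
    intro f
    calc (IΓ f) ^ ((1:ℝ)/2) ≤ (D * ‖f‖^2) ^ ((1:ℝ)/2) :=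
        Real.rpow_le_rpow (hIΓ0 f) (hΓBessel f) (by norm_num)
      _ = D ^ ((1:ℝ)/2) * ‖f‖ := by
          rw [Real.mul_rpow hD.le (by positivity), ← Real.rpow_natCast ‖f‖ 2,
            ← Real.rpow_mul (norm_nonneg f)]
          norm_num
  -- the lower bound for the operator norm of 1 - M, transported to the adjoint
  have hadj : ∀ g : H, ‖g - (adjoint M) g‖ ≤ lam * ‖g‖ := by
    intro g
    have hop : ‖(1 : H →L[ℂ] H) - M‖ ≤ lam := by
      refine opNorm_le_bound _ hlam₀.le fun f => ?_
      simpa using hpert f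
    have h1 : adjoint ((1 : H →L[ℂ] H) - M) = 1 - adjoint M := by
      have h1' : adjoint (1 : H →L[ℂ] H) = 1 := by
        rw [show (1 : H →L[ℂ] H) = ContinuousLinearMap.id ℂ H from rfl, adjoint_id]
      rw [map_sub, h1']
    have h2 : ‖(1 : H →L[ℂ] H) - adjoint M‖ ≤ lam := by
      rw [← h1, LinearIsometryEquiv.norm_map adjoint]
      exact hop
    calc ‖g - (adjoint M) g‖ = ‖((1 : H →L[ℂ] H) - adjoint M) g‖ := by simp
      _ ≤ ‖(1 : H →L[ℂ] H) - adjoint M‖ * ‖g‖ := le_opNorm _ g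
      _ ≤ lam * ‖g‖ := mul_le_mul_of_nonneg_right h2 (norm_nonneg g)
  constructor
  · -- Γ_UU is a frame
    intro f
    refine ⟨?_, hΓBessel f⟩
    have hsq : ‖M f‖ ^ 2 ≤ Cm * (IΓ f) ^ ((1:ℝ)/2) * (B ^ ((1:ℝ)/2) * ‖M f‖) := by
      have h1 : ‖M f‖ ^ 2 = ‖(inner ℂ (M f) (M f) : ℂ)‖ := by
        rw [inner_self_eq_norm_sq_to_K]; simp
      rw [h1]
      calc ‖(inner ℂ (M f) (M f) : ℂ)‖ ≤ Cm * (IΓ f) ^ ((1:ℝ)/2) * (IΛ (M f)) ^ ((1:ℝ)/2) :=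
          hkey f (M f)
        _ ≤ Cm * (IΓ f) ^ ((1:ℝ)/2) * (B ^ ((1:ℝ)/2) * ‖M f‖) :=
          mul_le_mul_of_nonneg_left (hBesselΛrt (M f)) (by positivity)
    have hlow : (1 - lam) * ‖f‖ ≤ ‖M f‖ := by
      have h1 := hpert f
      have h2 : ‖f‖ - ‖M f‖ ≤ ‖f - M f‖ := norm_sub_norm_le f (M f)
      nlinarith [norm_nonneg f]
    exact stmt17_aux lam Cm B (IΓ f) ‖f‖ ‖M f‖ hlam₁ hB hCm0 (hIΓ0 f)
      (norm_nonneg f) (norm_nonneg (M f)) hsq hlow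
  · -- Λ_TT is a frame
    intro g
    refine ⟨?_, hΛBessel g⟩
    have hsq : ‖(adjoint M) g‖ ^ 2 ≤
        Cm * (IΛ g) ^ ((1:ℝ)/2) * (D ^ ((1:ℝ)/2) * ‖(adjoint M) g‖) := by
      have h1 : ‖(adjoint M) g‖ ^ 2 = ‖(inner ℂ (M ((adjoint M) g)) g : ℂ)‖ := by
        calc ‖(adjoint M) g‖ ^ 2 = ‖(inner ℂ ((adjoint M) g) ((adjoint M) g) : ℂ)‖ := by
              rw [inner_self_eq_norm_sq_to_K]; simp
          _ = ‖(inner ℂ g (M ((adjoint M) g)) : ℂ)‖ := by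
              rw [adjoint_inner_left M ((adjoint M) g) g]
          _ = ‖(inner ℂ (M ((adjoint M) g)) g : ℂ)‖ := norm_inner_symm _ _
      rw [h1]
      calc ‖(inner ℂ (M ((adjoint M) g)) g : ℂ)‖
          ≤ Cm * (IΓ ((adjoint M) g)) ^ ((1:ℝ)/2) * (IΛ g) ^ ((1:ℝ)/2) :=
            hkey ((adjoint M) g) g
        _ = Cm * (IΛ g) ^ ((1:ℝ)/2) * (IΓ ((adjoint M) g)) ^ ((1:ℝ)/2) := by ring
        _ ≤ Cm * (IΛ g) ^ ((1:ℝ)/2) * (D ^ ((1:ℝ)/2) * ‖(adjoint M) g‖) :=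
            mul_le_mul_of_nonneg_left (hBesselΓrt ((adjoint M) g)) (by positivity)
    have hlow : (1 - lam) * ‖g‖ ≤ ‖(adjoint M) g‖ := by
      have h1 := hadj g
      have h2 : ‖g‖ - ‖(adjoint M) g‖ ≤ ‖g - (adjoint M) g‖ := norm_sub_norm_le _ _
      nlinarith [norm_nonneg g]
    exact stmt17_aux lam Cm D (IΛ g) ‖g‖ ‖(adjoint M) g‖ hlam₁ hD hCm0 (hIΛ0 g)
      (norm_nonneg g) (norm_nonneg _) hsq hlow
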